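/- Let p ≥ 4 be an integer, 1 ≤ a ≤ p−2 and 2 ≤ b ≤ p−1. For every integer L ≥ 2 and every real q with 0 < q < 1, B^p_{a,b}(L,b+1) = B^p_{a,b}(L−1,b+1) + q^{L−1}(q^{L−1} − 1) B^p_{a,b}(L−2,b+1) + q^{L−a+b} B̃^p_{a,b+1}(L−1,b+3) + q^{L−1} B̃^p_{a,b−1}(L−1,b+1). -/

import Mathlib

open Finset

noncomputable section

/-- `(q)_k = ∏_{j=1}^k (1 - q^j)`. -/
def qPoch (q : ℝ) (k : ℕ) : ℝ := ∏ j ∈ Finset.range k, (1 - q ^ (j + 1))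

/-- The Andrews–Baxter `q`-trinomial coefficient `T^n(L,A)`. -/
def qTri (q : ℝ) (n : ℤ) (L : ℕ) (A : ℤ) : ℝ :=
  if |A| ≤ (L : ℤ) then
    ∑ j ∈ Finset.range (L + 1),
      if 0 ≤ (j : ℤ) + A ∧ 0 ≤ (L : ℤ) - 2 * j - A then
        q ^ ((j : ℤ) * ((j : ℤ) + A - n)) * qPoch q L /
          (qPoch q j * qPoch q (((j : ℤ) + A).toNat) * qPoch q (((L : ℤ) - 2 * j - A).toNat))
      else 0
  else 0

/-- Bosonic polynomial `B^p_{a,b}(L,s)`. -/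
def Bpoly (q : ℝ) (p a b s : ℤ) (L : ℕ) : ℝ :=
  ∑' j : ℤ,
    (q ^ (p * (p + 1) * j ^ 2 + j * ((p + 1) * a - p * s)) * qTri q 0 L (2 * p * j + a - b)
      - q ^ ((p * j + a) * ((p + 1) * j + s)) * qTri q 0 L (2 * p * j + a + b))

/-- Bosonic polynomial `B̃^p_{a,b}(L,s)`. -/
def Btpoly (q : ℝ) (p a b s : ℤ) (L : ℕ) : ℝ :=
  ∑' j : ℤ,
    (q ^ (p * (p + 1) * j ^ 2 + j * ((p + 1) * a - p * s)) * qTri q 1 L (2 * p * j + a - b)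
      - q ^ (p * (p + 1) * j ^ 2 + j * ((p + 1) * a + p * (s - 2)) + a * (s - 1) - b)
        * qTri q 1 L (2 * p * j + a + b))

/-! The identity holds term by term in `j`. Write
`T^n(L,A) = ∑_j q^{j(j+A-n)} [j, j+A, L-2j-A]_q` with the `q`-multinomial coefficient
`[x,y,z]_q = (q)_{x+y+z} / ((q)_x (q)_y (q)_z)`, extended by zero to negative arguments.
The absorption identity `(1 - q^y)[x,y,z]_q = (1 - q^{x+y+z})[x,y-1,z]_q` gives
`T^1(L,A) = q^A T^0(L,A) + (1 - q^L) T^0(L-1,A-1)`, and the `q`-Pascal rule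
`[x,y,z]_q = [x,y,z-1]_q + q^z [x,y-1,z]_q + q^{y+z} [x-1,y,z]_q` gives
`T^0(L,A) = T^0(L-1,A) + q^{L-A} T^1(L-1,A-1) + q^{L+A} T^0(L-1,A+1)`.
Together they yield a four-term recurrence for `T^0(L,A)`; applied at `A = 2pj + a ∓ b` it
matches the `j`-th terms of both sides after shifting exponents. As `p ≠ 0`, only finitely many
`j` contribute, so the five series can be combined termwise. -/

theorem qPoch_succ (q : ℝ) (k : ℕ) : qPoch q (k + 1) = qPoch q k * (1 - q ^ (k + 1)) :=
  prod_range_succ _ _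

theorem one_sub_zpow_ne_zero {q : ℝ} (hq0 : 0 < q) (hq1 : q < 1) {n : ℤ} (hn : n ≠ 0) :
    1 - q ^ n ≠ 0 :=
  sub_ne_zero.2 fun h => hn ((zpow_eq_one_iff_right₀ hq0.le hq1.ne).1 h.symm)

def qMultinomial (q : ℝ) (x y z : ℤ) : ℝ :=
  if 0 ≤ x ∧ 0 ≤ y ∧ 0 ≤ z then
    qPoch q (x + y + z).toNat / (qPoch q x.toNat * qPoch q y.toNat * qPoch q z.toNat)
  else 0

theorem qMultinomial_of_neg (q : ℝ) {x y z : ℤ} (h : x < 0 ∨ y < 0 ∨ z < 0) :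
    qMultinomial q x y z = 0 :=
  if_neg (by omega)

theorem qMultinomial_comm_right (q : ℝ) (x y z : ℤ) :
    qMultinomial q x y z = qMultinomial q x z y := by
  simp only [qMultinomial, and_comm (a := 0 ≤ y), add_right_comm x y z,
    mul_right_comm _ (qPoch q y.toNat)]

theorem qMultinomial_comm_left (q : ℝ) (x y z : ℤ) :
    qMultinomial q x y z = qMultinomial q y x z := by
  simp only [qMultinomial, ← and_assoc, and_comm (a := 0 ≤ x), add_comm x y,
    mul_comm (qPoch q x.toNat)]

theorem one_sub_zpow_mul_qMultinomial {q : ℝ} (hq0 : 0 < q) (hq1 : q < 1) (x y z : ℤ) :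
    (1 - q ^ z) * qMultinomial q x y z = (1 - q ^ (x + y + z)) * qMultinomial q x y (z - 1) := by
  by_cases hxyz : 0 ≤ x ∧ 0 ≤ y ∧ 0 ≤ z
  · obtain ⟨hx, hy, hz⟩ := hxyz
    lift x to ℕ using hx
    lift y to ℕ using hy
    lift z to ℕ using hz
    rcases z with _ | z
    · simp [qMultinomial_of_neg]
    · have hne := one_sub_zpow_ne_zero hq0 hq1 (n := ((z + 1 : ℕ) : ℤ)) (by omega)
      simp only [zpow_natCast] at hne ⊢
      simp only [qMultinomial, Nat.cast_nonneg, true_and, if_true,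
        show ((z + 1 : ℕ) : ℤ) - 1 = z by push_cast; ring, ← Nat.cast_add, Int.toNat_natCast,
        ← add_assoc, qPoch_succ, zpow_natCast]
      field_simp
  · rw [qMultinomial_of_neg q (by omega), qMultinomial_of_neg q (by omega)]
    ring

theorem qMultinomial_pascal {q : ℝ} (hq0 : 0 < q) (hq1 : q < 1) {x y z : ℤ}
    (hN : x + y + z ≠ 0) :
    qMultinomial q x y z = qMultinomial q x y (z - 1) + q ^ z * qMultinomial q x (y - 1) z
      + q ^ (y + z) * qMultinomial q (x - 1) y z := by
  have hz := one_sub_zpow_mul_qMultinomial hq0 hq1 x y z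
  have hy := one_sub_zpow_mul_qMultinomial hq0 hq1 x z y
  rw [qMultinomial_comm_right q x z y, qMultinomial_comm_right q x z, add_right_comm] at hy
  have hx := one_sub_zpow_mul_qMultinomial hq0 hq1 y z x
  rw [qMultinomial_comm_right q y z x, qMultinomial_comm_left q y x, qMultinomial_comm_right q y z,
    qMultinomial_comm_left q y, add_rotate] at hx
  apply mul_left_cancel₀ (one_sub_zpow_ne_zero hq0 hq1 hN)
  simp only [zpow_add₀ hq0.ne'] at hz hy hx ⊢
  linear_combination hz + q ^ z * hy + q ^ y * q ^ z * hx

theorem qTri_eq_sum_range (q : ℝ) (n : ℤ) {L K : ℕ} (A : ℤ) (hK : L < K) :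
    qTri q n L A = ∑ j ∈ range K,
      q ^ ((j : ℤ) * (j + A - n)) * qMultinomial q j (j + A) (L - 2 * j - A) := by
  have hvanish : ∀ j : ℕ, L < j ∨ L < |A| →
      qMultinomial q j (j + A) (L - 2 * j - A) = 0 := by
    intro j hj
    rw [lt_abs] at hj
    exact qMultinomial_of_neg q (by omega)
  rw [← sum_subset (range_subset_range.2 hK) fun j _ hj =>
    by rw [hvanish j (.inl (by simpa using hj)), mul_zero]]
  unfold qTri
  split_ifs with hA
  · refine sum_congr rfl fun j _ => ?_
    simp only [qMultinomial, Nat.cast_nonneg, true_and, Int.toNat_natCast, mul_div_assoc]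
    split_ifs <;> simp [show ((j : ℤ) + (j + A) + (L - 2 * j - A)).toNat = L by omega]
  · exact (sum_eq_zero fun j _ => by rw [hvanish j (.inr (not_le.1 hA)), mul_zero]).symm

theorem qTri_one_succ {q : ℝ} (hq0 : 0 < q) (hq1 : q < 1) (M : ℕ) (A : ℤ) :
    qTri q 1 (M + 1) A
      = q ^ A * qTri q 0 (M + 1) A + (1 - q ^ ((M : ℤ) + 1)) * qTri q 0 M (A - 1) := by
  rw [qTri_eq_sum_range q 1 A (Nat.lt_succ_self (M + 1)),
    qTri_eq_sum_range q 0 A (Nat.lt_succ_self (M + 1)),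
    qTri_eq_sum_range q 0 (A - 1) (by omega : M < M + 2), mul_sum, mul_sum, ← sum_add_distrib]
  refine sum_congr rfl fun j _ => ?_
  have habsorb := one_sub_zpow_mul_qMultinomial hq0 hq1 j ((M + 1 : ℕ) - 2 * j - A) (j + A)
  rw [qMultinomial_comm_right q j _ (j + A), qMultinomial_comm_right q j _ (j + A - 1)] at habsorb
  have hexp : q ^ A * q ^ ((j : ℤ) * (j + A - 0))
      = q ^ ((j : ℤ) * (j + A - 1)) * q ^ ((j : ℤ) + A) := by
    rw [← zpow_add₀ hq0.ne', ← zpow_add₀ hq0.ne']; ring_nf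
  push_cast at habsorb ⊢
  rw [show (j : ℤ) + (M + 1 - 2 * j - A) + (j + A) = M + 1 by ring] at habsorb
  rw [show (j : ℤ) + (A - 1) - 0 = j + A - 1 by ring,
    show (j : ℤ) + (A - 1) = j + A - 1 by ring,
    show (M : ℤ) - 2 * j - (A - 1) = M + 1 - 2 * j - A by ring]
  linear_combination q ^ ((j : ℤ) * (j + A - 1)) * habsorb
    - qMultinomial q j (j + A) (M + 1 - 2 * j - A) * hexp

theorem qTri_zero_succ {q : ℝ} (hq0 : 0 < q) (hq1 : q < 1) (M : ℕ) (A : ℤ) :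
    qTri q 0 (M + 1) A = qTri q 0 M A + q ^ ((M : ℤ) + 1 - A) * qTri q 1 M (A - 1)
      + q ^ ((M : ℤ) + 1 + A) * qTri q 0 M (A + 1) := by
  set shifted : ℤ → ℝ := fun j =>
    q ^ ((j - 1) * (j + A)) * qMultinomial q (j - 1) (j + A) (M + 1 - 2 * j - A)
  have hshift : ∑ j ∈ range (M + 2), shifted j = qTri q 0 M (A + 1) := by
    rw [sum_range_succ', qTri_eq_sum_range q 0 (A + 1) (Nat.lt_succ_self M)]
    simp only [shifted, qMultinomial_of_neg q (x := (0 : ℕ) - 1) (by simp), mul_zero, add_zero]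
    refine sum_congr rfl fun j _ => ?_
    push_cast
    ring_nf
  rw [qTri_eq_sum_range q 0 A (Nat.lt_succ_self (M + 1)),
    qTri_eq_sum_range q 0 A (by omega : M < M + 2),
    qTri_eq_sum_range q 1 (A - 1) (by omega : M < M + 2), ← hshift, mul_sum, mul_sum,
    ← sum_add_distrib, ← sum_add_distrib]
  refine sum_congr rfl fun j _ => ?_
  push_cast
  rw [qMultinomial_pascal hq0 hq1 (by ring_nf; positivity)]
  have hexp₁ : q ^ ((j : ℤ) * (j + A - 0)) * q ^ ((M : ℤ) + 1 - 2 * j - A)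
      = q ^ ((M : ℤ) + 1 - A) * q ^ ((j : ℤ) * (j + A - 1 - 1)) := by
    rw [← zpow_add₀ hq0.ne', ← zpow_add₀ hq0.ne']; ring_nf
  have hexp₂ : q ^ ((j : ℤ) * (j + A - 0)) * q ^ ((j : ℤ) + A + (M + 1 - 2 * j - A))
      = q ^ ((M : ℤ) + 1 + A) * q ^ (((j : ℤ) - 1) * (j + A)) := by
    rw [← zpow_add₀ hq0.ne', ← zpow_add₀ hq0.ne']; ring_nf
  rw [show (M : ℤ) + 1 - 2 * j - A - 1 = M - 2 * j - A by ring,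
    show (j : ℤ) + (A - 1) = j + A - 1 by ring,
    show (M : ℤ) - 2 * j - (A - 1) = M + 1 - 2 * j - A by ring]
  simp only [shifted]
  linear_combination qMultinomial q j (j + A - 1) (M + 1 - 2 * j - A) * hexp₁
    + qMultinomial q (j - 1) (j + A) (M + 1 - 2 * j - A) * hexp₂

theorem qTri_zero_add_two {q : ℝ} (hq0 : 0 < q) (hq1 : q < 1) (M : ℕ) (A : ℤ) :
    qTri q 0 (M + 2) A
      = qTri q 0 (M + 1) A + q ^ ((M : ℤ) + 1) * (q ^ ((M : ℤ) + 1) - 1) * qTri q 0 M A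
        + q ^ ((M : ℤ) + 2 - A) * qTri q 1 (M + 1) (A - 1)
        + q ^ ((M : ℤ) + 1) * qTri q 1 (M + 1) (A + 1) := by
  have hF := qTri_zero_succ hq0 hq1 (M + 1) A
  have hG := qTri_one_succ hq0 hq1 M (A + 1)
  rw [add_sub_cancel_right] at hG
  have hexp : q ^ ((M : ℤ) + 1) * q ^ (A + 1) = q ^ ((M + 1 : ℕ) + 1 + A : ℤ) := by
    rw [← zpow_add₀ hq0.ne']; push_cast; ring_nf
  rw [show ((M + 1 : ℕ) : ℤ) + 1 - A = M + 2 - A by push_cast; ring] at hF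
  linear_combination hF - q ^ ((M : ℤ) + 1) * hG - qTri q 0 (M + 1) (A + 1) * hexp

theorem summable_mul_qTri {p : ℤ} (hp : p ≠ 0) (f : ℤ → ℝ) (q : ℝ) (n c : ℤ)
    (L : ℕ) :
    Summable fun j : ℤ => f j * qTri q n L (2 * p * j + c) := by
  refine summable_of_hasFiniteSupport <|
    (Set.finite_Icc (-(L + |c|)) (L + |c|)).subset fun j hj => ?_
  have hT : |2 * p * j + c| ≤ L := by
    by_contra h
    exact hj (by simp [qTri, h])
  have hj : |j| ≤ |2 * p * j| := by
    rw [abs_mul, abs_mul, abs_two]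
    nlinarith [abs_nonneg j, Int.one_le_abs hp]
  have := abs_add_le (2 * p * j + c) (-c)
  rw [abs_neg, add_neg_cancel_right] at this
  simp only [Set.mem_Icc, ← abs_le]
  omega

def bosonicSummand (q : ℝ) (p a b s : ℤ) (L : ℕ) (j : ℤ) : ℝ :=
  q ^ (p * (p + 1) * j ^ 2 + j * ((p + 1) * a - p * s)) * qTri q 0 L (2 * p * j + a - b)
    - q ^ ((p * j + a) * ((p + 1) * j + s)) * qTri q 0 L (2 * p * j + a + b)

def bosonicSummandTilde (q : ℝ) (p a b s : ℤ) (L : ℕ) (j : ℤ) : ℝ :=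
  q ^ (p * (p + 1) * j ^ 2 + j * ((p + 1) * a - p * s)) * qTri q 1 L (2 * p * j + a - b)
    - q ^ (p * (p + 1) * j ^ 2 + j * ((p + 1) * a + p * (s - 2)) + a * (s - 1) - b)
      * qTri q 1 L (2 * p * j + a + b)

theorem summable_bosonicSummand {p : ℤ} (hp : p ≠ 0) (q : ℝ) (a b s : ℤ) (L : ℕ) :
    Summable (bosonicSummand q p a b s L) := by
  unfold bosonicSummand
  simp only [add_sub_assoc, add_assoc]
  exact (summable_mul_qTri hp _ q 0 _ L).sub (summable_mul_qTri hp _ q 0 _ L)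

theorem summable_bosonicSummandTilde {p : ℤ} (hp : p ≠ 0) (q : ℝ) (a b s : ℤ) (L : ℕ) :
    Summable (bosonicSummandTilde q p a b s L) := by
  unfold bosonicSummandTilde
  simp only [add_sub_assoc, add_assoc]
  exact (summable_mul_qTri hp _ q 1 _ L).sub (summable_mul_qTri hp _ q 1 _ L)

theorem bosonicSummand_recurrence {q : ℝ} (hq0 : 0 < q) (hq1 : q < 1) (p a b : ℤ) {L : ℕ}
    (hL : 2 ≤ L) (j : ℤ) :
    bosonicSummand q p a b (b + 1) L j
      = bosonicSummand q p a b (b + 1) (L - 1) j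
        + q ^ ((L : ℤ) - 1) * (q ^ ((L : ℤ) - 1) - 1) * bosonicSummand q p a b (b + 1) (L - 2) j
        + q ^ ((L : ℤ) - a + b) * bosonicSummandTilde q p a (b + 1) (b + 3) (L - 1) j
        + q ^ ((L : ℤ) - 1) * bosonicSummandTilde q p a (b - 1) (b + 1) (L - 1) j := by
  obtain ⟨M, rfl⟩ : ∃ M, L = M + 2 := ⟨L - 2, by omega⟩
  simp only [bosonicSummand, bosonicSummandTilde, Nat.add_sub_cancel,
    show M + 2 - 1 = M + 1 by omega, qTri_zero_add_two hq0 hq1 M]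
  rw [show 2 * p * j + a - (b + 1) = 2 * p * j + a - b - 1 by ring,
    show 2 * p * j + a + (b + 1) = 2 * p * j + a + b + 1 by ring,
    show 2 * p * j + a - (b - 1) = 2 * p * j + a - b + 1 by ring,
    show 2 * p * j + a + (b - 1) = 2 * p * j + a + b - 1 by ring]
  push_cast
  rw [show (M : ℤ) + 2 - 1 = M + 1 by ring]
  have hexp₁ : q ^ ((M : ℤ) + 2 - a + b)
        * q ^ (p * (p + 1) * j ^ 2 + j * ((p + 1) * a - p * (b + 3)))
      = q ^ (p * (p + 1) * j ^ 2 + j * ((p + 1) * a - p * (b + 1)))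
        * q ^ ((M : ℤ) + 2 - (2 * p * j + a - b)) := by
    rw [← zpow_add₀ hq0.ne', ← zpow_add₀ hq0.ne']; ring_nf
  have hexp₂ : q ^ ((M : ℤ) + 2 - a + b)
        * q ^ (p * (p + 1) * j ^ 2 + j * ((p + 1) * a + p * (b + 3 - 2)) + a * (b + 3 - 1)
          - (b + 1))
      = q ^ ((p * j + a) * ((p + 1) * j + (b + 1))) * q ^ ((M : ℤ) + 1) := by
    rw [← zpow_add₀ hq0.ne', ← zpow_add₀ hq0.ne']; ring_nf
  have hexp₃ : q ^ ((M : ℤ) + 1)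
        * q ^ (p * (p + 1) * j ^ 2 + j * ((p + 1) * a + p * (b + 1 - 2)) + a * (b + 1 - 1)
          - (b - 1))
      = q ^ ((p * j + a) * ((p + 1) * j + (b + 1)))
        * q ^ ((M : ℤ) + 2 - (2 * p * j + a + b)) := by
    rw [← zpow_add₀ hq0.ne', ← zpow_add₀ hq0.ne']; ring_nf
  linear_combination -qTri q 1 (M + 1) (2 * p * j + a - b - 1) * hexp₁
    + qTri q 1 (M + 1) (2 * p * j + a + b + 1) * hexp₂
    + qTri q 1 (M + 1) (2 * p * j + a + b - 1) * hexp₃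

theorem Bpoly_recurrence_general_general (p a b : ℤ) (hp : 4 ≤ p)
    (L : ℕ) (hL : 2 ≤ L) (q : ℝ) (hq0 : 0 < q) (hq1 : q < 1) :
    Bpoly q p a b (b + 1) L
      = Bpoly q p a b (b + 1) (L - 1)
        + q ^ ((L : ℤ) - 1) * (q ^ ((L : ℤ) - 1) - 1) * Bpoly q p a b (b + 1) (L - 2)
        + q ^ ((L : ℤ) - a + b) * Btpoly q p a (b + 1) (b + 3) (L - 1)
        + q ^ ((L : ℤ) - 1) * Btpoly q p a (b - 1) (b + 1) (L - 1) := by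
  have hp0 : p ≠ 0 := by omega
  change ∑' j, bosonicSummand q p a b (b + 1) L j = _
  rw [tsum_congr (bosonicSummand_recurrence hq0 hq1 p a b hL)]
  exact ((((summable_bosonicSummand hp0 q a b _ _).hasSum.add
    ((summable_bosonicSummand hp0 q a b _ _).hasSum.mul_left _)).add
    ((summable_bosonicSummandTilde hp0 q a _ _ _).hasSum.mul_left _)).add
    ((summable_bosonicSummandTilde hp0 q a _ _ _).hasSum.mul_left _)).tsum_eq

/-- For integers `p ≥ 4`, `1 ≤ a ≤ p-2`, `2 ≤ b ≤ p-1`, every `L ≥ 2` and `0 < q < 1`: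
`B^p_{a,b}(L,b+1) = B^p_{a,b}(L-1,b+1) + q^{L-1}(q^{L-1}-1) B^p_{a,b}(L-2,b+1)
  + q^{L-a+b} B̃^p_{a,b+1}(L-1,b+3) + q^{L-1} B̃^p_{a,b-1}(L-1,b+1)`. -/
theorem Bpoly_recurrence_general (p a b : ℤ) (hp : 4 ≤ p) (ha1 : 1 ≤ a) (ha2 : a ≤ p - 2)
    (hb1 : 2 ≤ b) (hb2 : b ≤ p - 1)
    (L : ℕ) (hL : 2 ≤ L) (q : ℝ) (hq0 : 0 < q) (hq1 : q < 1) :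
    Bpoly q p a b (b + 1) L
      = Bpoly q p a b (b + 1) (L - 1)
        + q ^ ((L : ℤ) - 1) * (q ^ ((L : ℤ) - 1) - 1) * Bpoly q p a b (b + 1) (L - 2)
        + q ^ ((L : ℤ) - a + b) * Btpoly q p a (b + 1) (b + 3) (L - 1)
        + q ^ ((L : ℤ) - 1) * Btpoly q p a (b - 1) (b + 1) (L - 1) :=
  Bpoly_recurrence_general_general p a b hp L hL q hq0 hq1
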